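/- (Point-plus-simplex structure, case m₃ > m₂ > m₁ ≥ 2) Assume m₃ > m₂ > m₁ ≥ 2 and let v₀ ∈ V₂. Then the set S ∖ {v₀} (which has n+1 elements) is affinely independent, and v₀ does not belong to the convex hull of S ∖ {v₀}; hence conv(S) is the convex hull of the union of an n-simplex and a point outside it. -/

import Mathlib

/-!
Since the `n + 2` points of `S` span an `n`-dimensional space, their linear relations form a
plane, spanned by `𝟙_{V₁} - 𝟙_{V₂}` and `𝟙_{V₂} - 𝟙_{V₃}`. So every relation is constant on each
block, with values `a, b, c` summing to `0`. An affine dependence of `S ∖ {v₀}`, extended by `0` at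
`v₀`, is such a relation with `b = 0`, and its weight sum `a m₁ + c m₃ = a (m₁ - m₃)` then forces
`a = c = 0`. Writing `v₀` as a convex combination of `S ∖ {v₀}` gives a relation worth `1` at `v₀` but `≤ 0` at the other points of `V₂`.
-/

open Finset Module Submodule

section LinearRelations

variable {K E : Type*} [Field K] [AddCommGroup E] [Module K E]

theorem finrank_ker_linearCombination_add_finrank_span (S : Finset E) :
    finrank K (LinearMap.ker (Fintype.linearCombination K ((↑) : S → E))) +
      finrank K (span K (S : Set E)) = #S := by
  have := LinearMap.finrank_range_add_finrank_ker (Fintype.linearCombination K ((↑) : S → E))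
  have range_coe : Set.range ((↑) : S → E) = S := by ext; simp
  rw [Fintype.range_linearCombination, range_coe, finrank_fintype_fun_eq_card,
    Fintype.card_coe] at this
  omega

theorem exists_eq_sum_mul_of_linearIndependent_relations {k : ℕ} {S : Finset E}
    (hrank : finrank K (span K (S : Set E)) + k = #S) {r : Fin k → E → K}
    (hr : ∀ i, ∑ v ∈ S, r i v • v = 0) (hli : LinearIndependent K fun i (v : S) ↦ r i v)
    {g : E → K} (hg : ∑ v ∈ S, g v • v = 0) :
    ∃ c : Fin k → K, ∀ v ∈ S, g v = ∑ i, c i * r i v := by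
  have hker := finrank_ker_linearCombination_add_finrank_span (K := K) S
  set φ := Fintype.linearCombination K ((↑) : S → E)
  have mem_ker {f : E → K} (hf : ∑ v ∈ S, f v • v = 0) : (fun v : S ↦ f v) ∈ LinearMap.ker φ := by
    rwa [LinearMap.mem_ker, Fintype.linearCombination_apply, sum_coe_sort S (fun v ↦ f v • v)]
  have span_eq_ker : span K (Set.range fun i (v : S) ↦ r i v) = LinearMap.ker φ := by
    refine eq_of_le_of_finrank_eq (span_le.2 ?_) ?_
    · rintro _ ⟨i, rfl⟩
      exact mem_ker (hr i)
    · rw [finrank_span_eq_card hli, Fintype.card_fin]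
      omega
  obtain ⟨c, hc⟩ := (mem_span_range_iff_exists_fun K).1 (span_eq_ker ▸ mem_ker hg)
  exact ⟨c, fun v hv ↦ by simpa using (congrFun hc ⟨v, hv⟩).symm⟩

theorem Finset.affineIndependent_coe_iff {s : Finset E} :
    AffineIndependent K ((↑) : s → E) ↔
      ∀ w : E → K, ∑ x ∈ s, w x = 0 → ∑ x ∈ s, w x • x = 0 → ∀ x ∈ s, w x = 0 := by
  refine ⟨fun h w ↦ h.eq_zero_of_sum_eq_zero_subtype, fun h ↦ ?_⟩
  rw [affineIndependent_iff_of_fintype]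
  intro w hw₀ hw₁ x
  set W : E → K := Function.extend (↑) w 0
  have hW (y : s) : W y = w y := Subtype.val_injective.extend_apply w 0 y
  rw [univ.weightedVSub_eq_linear_combination hw₀] at hw₁
  rw [← hW]
  refine h W ?_ ?_ x x.2
  · rw [← sum_coe_sort]; simpa only [hW] using hw₀
  · rw [← sum_coe_sort s (fun x ↦ W x • x)]; simpa only [hW] using hw₁

variable [DecidableEq E]

theorem sum_update_smul_of_mem {S : Finset E} {v₀ : E} (h : v₀ ∈ S) (g : E → K) (c : K) :
    ∑ v ∈ S, Function.update g v₀ c v • v = c • v₀ + ∑ v ∈ S \ {v₀}, g v • v := by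
  have : (fun v ↦ Function.update g v₀ c v • v) =
      Function.update (fun v ↦ g v • v) v₀ (c • v₀) := by
    ext v
    by_cases hv : v = v₀ <;> simp [hv]
  rw [this, sum_update_of_mem h]

theorem affineIndependent_sdiff_singleton_of_forall_relation {S : Finset E} {v₀ : E}
    (hv₀ : v₀ ∈ S)
    (h : ∀ g : E → K, ∑ v ∈ S, g v • v = 0 → g v₀ = 0 → ∑ v ∈ S, g v = 0 → ∀ v ∈ S, g v = 0) :
    AffineIndependent K ((↑) : (S \ {v₀} : Finset E) → E) := by
  refine Finset.affineIndependent_coe_iff.2 fun g hg₀ hg₁ v hv ↦ ?_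
  have hne : v ≠ v₀ := by simpa using (mem_sdiff.1 hv).2
  have := h (Function.update g v₀ 0) (by simp [sum_update_smul_of_mem hv₀, hg₁])
    (Function.update_self ..) (by simp [sum_update_of_mem hv₀, hg₀]) v (mem_sdiff.1 hv).1
  rwa [Function.update_of_ne hne] at this

theorem sum_ite_mem_sub_ite_mem_smul {S A B : Finset E} (hA : A ⊆ S) (hB : B ⊆ S) :
    ∑ v ∈ S, ((if v ∈ A then 1 else 0) - (if v ∈ B then 1 else 0) : K) • v =
      ∑ v ∈ A, v - ∑ v ∈ B, v := by
  simp only [sub_smul, ite_smul, one_smul, zero_smul, sum_sub_distrib, sum_ite_mem,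
    inter_eq_right.2 hA, inter_eq_right.2 hB]

end LinearRelations

theorem notMem_convexHull_sdiff_singleton_of_forall_relation {𝕜 E : Type*} [Field 𝕜]
    [LinearOrder 𝕜] [IsStrictOrderedRing 𝕜] [AddCommGroup E] [Module 𝕜 E] [DecidableEq E]
    {S : Finset E} {v₀ w : E} (hv₀ : v₀ ∈ S) (hw : w ∈ S) (hne : w ≠ v₀)
    (h : ∀ g : E → 𝕜, ∑ v ∈ S, g v • v = 0 → g w = g v₀) :
    v₀ ∉ convexHull 𝕜 ((S \ {v₀} : Finset E) : Set E) := by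
  rw [Finset.mem_convexHull']
  rintro ⟨c, hc₀, -, hc⟩
  have := h (Function.update (-c) v₀ 1) (by
    simp [sum_update_smul_of_mem hv₀, neg_smul, sum_neg_distrib, hc])
  rw [Function.update_of_ne hne, Function.update_self, Pi.neg_apply] at this
  linarith [hc₀ w (by simp [hw, hne])]

section ThreeBlocks

variable {K E : Type*} [Field K] [DecidableEq E] {S V₁ V₂ V₃ : Finset E}

theorem exists_blockwise_eq_of_relation [AddCommGroup E] [Module K E] (hS : V₁ ∪ V₂ ∪ V₃ = S)
    (h₁₂ : Disjoint V₁ V₂) (h₁₃ : Disjoint V₁ V₃) (h₂₃ : Disjoint V₂ V₃)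
    (hV₁ : V₁.Nonempty) (hV₃ : V₃.Nonempty)
    (hsum₁₂ : ∑ v ∈ V₁, v = ∑ v ∈ V₂, v) (hsum₂₃ : ∑ v ∈ V₂, v = ∑ v ∈ V₃, v)
    (hrank : finrank K (span K (S : Set E)) + 2 = #S)
    {g : E → K} (hg : ∑ v ∈ S, g v • v = 0) :
    ∃ a b c : K, a + b + c = 0 ∧ (∀ v ∈ V₁, g v = a) ∧ (∀ v ∈ V₂, g v = b) ∧
      ∀ v ∈ V₃, g v = c := by
  have hV₁S : V₁ ⊆ S := hS ▸ subset_union_left.trans subset_union_left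
  have hV₂S : V₂ ⊆ S := hS ▸ subset_union_right.trans subset_union_left
  have hV₃S : V₃ ⊆ S := hS ▸ subset_union_right
  set e : Fin 2 → E → K := ![
    fun v ↦ (if v ∈ V₁ then 1 else 0) - (if v ∈ V₂ then 1 else 0),
    fun v ↦ (if v ∈ V₂ then 1 else 0) - (if v ∈ V₃ then 1 else 0)]
  have he : ∀ i, ∑ v ∈ S, e i v • v = 0 := by
    intro i
    fin_cases i
    · simpa [e, sum_ite_mem_sub_ite_mem_smul hV₁S hV₂S] using sub_eq_zero.2 hsum₁₂
    · simpa [e, sum_ite_mem_sub_ite_mem_smul hV₂S hV₃S] using sub_eq_zero.2 hsum₂₃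
  obtain ⟨w₁, hw₁⟩ := hV₁
  obtain ⟨w₃, hw₃⟩ := hV₃
  have hli : LinearIndependent K fun i (v : S) ↦ e i v := by
    have pair : (fun i (v : S) ↦ e i v) = ![fun v : S ↦ e 0 v, fun v : S ↦ e 1 v] := by
      ext i; fin_cases i <;> rfl
    rw [pair, LinearIndependent.pair_iff]
    intro a b hab
    have h₁ := congrFun hab ⟨w₁, hV₁S hw₁⟩
    have h₃ := congrFun hab ⟨w₃, hV₃S hw₃⟩
    constructor
    · simpa [e, hw₁, disjoint_left.1 h₁₂ hw₁, disjoint_left.1 h₁₃ hw₁] using h₁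
    · simpa [e, hw₃, disjoint_right.1 h₂₃ hw₃, disjoint_right.1 h₁₃ hw₃] using h₃
  obtain ⟨c, hc⟩ := exists_eq_sum_mul_of_linearIndependent_relations hrank he hli hg
  refine ⟨c 0, -c 0 + c 1, -c 1, by ring, fun v hv ↦ ?_, fun v hv ↦ ?_, fun v hv ↦ ?_⟩
  · simp [hc v (hV₁S hv), e, hv, disjoint_left.1 h₁₂ hv, disjoint_left.1 h₁₃ hv]
  · simp [hc v (hV₂S hv), e, hv, disjoint_right.1 h₁₂ hv, disjoint_left.1 h₂₃ hv]
  · simp [hc v (hV₃S hv), e, hv, disjoint_right.1 h₁₃ hv, disjoint_right.1 h₂₃ hv]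

theorem eq_zero_of_blockwise_eq_of_sum_eq_zero [CharZero K] (hS : V₁ ∪ V₂ ∪ V₃ = S)
    (h₁₂ : Disjoint V₁ V₂) (h₁₃ : Disjoint V₁ V₃) (h₂₃ : Disjoint V₂ V₃) (hcard : #V₁ ≠ #V₃)
    {g : E → K} {a b c : K} (habc : a + b + c = 0) (ha : ∀ v ∈ V₁, g v = a)
    (hb : ∀ v ∈ V₂, g v = b) (hc : ∀ v ∈ V₃, g v = c) (hsum : ∑ v ∈ S, g v = 0)
    {v₀ : E} (hv₀ : v₀ ∈ V₂) (hg₀ : g v₀ = 0) :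
    ∀ v ∈ S, g v = 0 := by
  have hb₀ : b = 0 := (hb v₀ hv₀).symm.trans hg₀
  have hsum' : a * #V₁ + b * #V₂ + c * #V₃ = 0 := by
    rw [← hsum, ← hS, sum_union (disjoint_union_left.2 ⟨h₁₃, h₂₃⟩), sum_union h₁₂,
      sum_congr rfl ha, sum_congr rfl hb, sum_congr rfl hc]
    simp [mul_comm]
  have hcard' : (#V₁ : K) - #V₃ ≠ 0 := sub_ne_zero.2 (Nat.cast_injective.ne hcard)
  have ha₀ : a = 0 := by
    refine (mul_eq_zero.1 (?_ : a * ((#V₁ : K) - #V₃) = 0)).resolve_right hcard'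
    linear_combination hsum' + ((#V₃ : K) - #V₂) * hb₀ - (#V₃ : K) * habc
  intro v hv
  rw [← hS, mem_union, mem_union] at hv
  rcases hv with (hv | hv) | hv
  · rw [ha v hv, ha₀]
  · rw [hb v hv, hb₀]
  · rw [hc v hv]; linear_combination habc - ha₀ - hb₀

end ThreeBlocks

theorem stmt_8_general
    (n : ℕ)
    (S V1 V2 V3 : Finset (Fin (2 * n) → ℝ))
    (hScard : S.card = n + 2)
    (hunion : V1 ∪ V2 ∪ V3 = S)
    (hd12 : Disjoint V1 V2) (hd13 : Disjoint V1 V3) (hd23 : Disjoint V2 V3)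
    (hne1 : V1.Nonempty) (hne3 : V3.Nonempty)
    (hsum1 : ∑ v ∈ V1, v = fun _ => (1 : ℝ))
    (hsum2 : ∑ v ∈ V2, v = fun _ => (1 : ℝ))
    (hsum3 : ∑ v ∈ V3, v = fun _ => (1 : ℝ))
    (hspan : Module.finrank ℝ (Submodule.span ℝ (S : Set (Fin (2 * n) → ℝ))) = n)
    (h12 : V1.card < V2.card) (h23 : V2.card < V3.card)
    : ∀ v₀ ∈ V2,
      (S \ {v₀}).card = n + 1 ∧
      AffineIndependent ℝ (fun x : {x // x ∈ S \ {v₀}} => (x : Fin (2 * n) → ℝ)) ∧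
      v₀ ∉ convexHull ℝ ((S \ {v₀} : Finset (Fin (2 * n) → ℝ)) : Set (Fin (2 * n) → ℝ)) := by
  intro v₀ hv₀
  have hV₂S : V2 ⊆ S := hunion ▸ subset_union_right.trans subset_union_left
  have blockwise {g : (Fin (2 * n) → ℝ) → ℝ} (hg : ∑ v ∈ S, g v • v = 0) :=
    exists_blockwise_eq_of_relation hunion hd12 hd13 hd23 hne1 hne3 (hsum1.trans hsum2.symm)
      (hsum2.trans hsum3.symm) (by omega) hg
  obtain ⟨w, hw, hwv₀⟩ := exists_mem_ne (lt_of_le_of_lt hne1.card_pos h12) v₀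
  refine ⟨?_, ?_, ?_⟩
  · rw [card_sdiff_of_subset (singleton_subset_iff.2 (hV₂S hv₀)), hScard, card_singleton]
    rfl
  · refine affineIndependent_sdiff_singleton_of_forall_relation (hV₂S hv₀) fun g hg hg₀ hsum ↦ ?_
    obtain ⟨a, b, c, habc, ha, hb, hc⟩ := blockwise hg
    exact eq_zero_of_blockwise_eq_of_sum_eq_zero hunion hd12 hd13 hd23 (by omega) habc ha hb hc
      hsum hv₀ hg₀
  · refine notMem_convexHull_sdiff_singleton_of_forall_relation (hV₂S hv₀) (hV₂S hw) hwv₀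
      fun g hg ↦ ?_
    obtain ⟨-, b, -, -, -, hb, -⟩ := blockwise hg
    rw [hb w hw, hb v₀ hv₀]

theorem stmt_8
    (n : ℕ) (hn : 0 < n)
    (S V1 V2 V3 : Finset (Fin (2 * n) → ℝ))
    (h01 : ∀ v ∈ S, ∀ i, v i = 0 ∨ v i = 1)
    (hScard : S.card = n + 2)
    (hunion : V1 ∪ V2 ∪ V3 = S)
    (hd12 : Disjoint V1 V2) (hd13 : Disjoint V1 V3) (hd23 : Disjoint V2 V3)
    (hne1 : V1.Nonempty) (hne2 : V2.Nonempty) (hne3 : V3.Nonempty)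
    (hsum1 : ∑ v ∈ V1, v = fun _ => (1 : ℝ))
    (hsum2 : ∑ v ∈ V2, v = fun _ => (1 : ℝ))
    (hsum3 : ∑ v ∈ V3, v = fun _ => (1 : ℝ))
    (hspan : Module.finrank ℝ (Submodule.span ℝ (S : Set (Fin (2 * n) → ℝ))) = n)
    (hm1 : 2 ≤ V1.card) (h12 : V1.card < V2.card) (h23 : V2.card < V3.card)
    : ∀ v₀ ∈ V2,
      (S \ {v₀}).card = n + 1 ∧
      AffineIndependent ℝ (fun x : {x // x ∈ S \ {v₀}} => (x : Fin (2 * n) → ℝ)) ∧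
      v₀ ∉ convexHull ℝ ((S \ {v₀} : Finset (Fin (2 * n) → ℝ)) : Set (Fin (2 * n) → ℝ)) :=
  stmt_8_general n S V1 V2 V3 hScard hunion hd12 hd13 hd23 hne1 hne3 hsum1 hsum2 hsum3 hspan h12 h23
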